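/- Let n∈ℕ, λ>0, γ≥0, σ>0, α>0, x₁,…,xₙ∈ℝ, and set x̄ₙ = (1/n)·Σ_{j=1}ⁿ xⱼ. Define Xᵢ*(t) = (xᵢ−x̄ₙ)e^{θ₋t} + x̄ₙe^{ρ₋t} for t≥0. Then each Xᵢ* is C² on [0,∞), satisfies Xᵢ*(0)=xᵢ and Xᵢ*(t)→0 as t→∞, has ∫₀^∞(Xᵢ*(t))²dt<∞ and ∫₀^∞(Ẋᵢ*(t))²dt<∞, and the tuple solves the coupled Euler–Lagrange system ασ²Xᵢ*(t) − 2λẌᵢ*(t) = γ·Σ_{j≠i} Ẋⱼ*(t) + λ·Σ_{j≠i} Ẍⱼ*(t) for all t≥0 and all i=1,…,n. -/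

import Mathlib

open Set Filter MeasureTheory

noncomputable def thetaHat (lam gam sig al : ℝ) : ℝ :=
  Real.sqrt (gam ^ 2 + 4 * al * sig ^ 2 * lam) / (2 * lam)

noncomputable def rhoHat (n : ℕ) (lam gam sig al : ℝ) : ℝ :=
  Real.sqrt (((n : ℝ) - 1) ^ 2 * gam ^ 2 + 4 * ((n : ℝ) + 1) * al * sig ^ 2 * lam)
    / (2 * ((n : ℝ) + 1) * lam)

noncomputable def thetaMinus (lam gam sig al : ℝ) : ℝ :=
  gam / (2 * lam) - thetaHat lam gam sig al

noncomputable def rhoMinus (n : ℕ) (lam gam sig al : ℝ) : ℝ :=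
  -(((n : ℝ) - 1) * gam) / (2 * ((n : ℝ) + 1) * lam) - rhoHat n lam gam sig al

/-- The infinite-horizon equilibrium strategy
`Xᵢ*(t) = (xᵢ − x̄ₙ)e^{θ₋t} + x̄ₙe^{ρ₋t}`. -/
noncomputable def XstarInf (n : ℕ) (lam gam sig al : ℝ) (x : Fin n → ℝ)
    (i : Fin n) (t : ℝ) : ℝ :=
  (x i - (1 / (n : ℝ)) * ∑ j, x j) * Real.exp (thetaMinus lam gam sig al * t)
    + ((1 / (n : ℝ)) * ∑ j, x j) * Real.exp (rhoMinus n lam gam sig al * t)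

/- ### Auxiliary lemmas -/

lemma hda1 (a c : ℝ) (t : ℝ) :
    HasDerivAt (fun s => a * Real.exp (c * s)) (a * c * Real.exp (c * t)) t := by
  have h : HasDerivAt (fun s : ℝ => c * s) c t := by
    simpa using (hasDerivAt_id t).const_mul c
  have h3 := ((Real.hasDerivAt_exp (c * t)).comp t h).const_mul a
  exact h3.congr_deriv (by ring)

lemma hda2 (a b c d : ℝ) (t : ℝ) :
    HasDerivAt (fun s => a * Real.exp (c * s) + b * Real.exp (d * s))
      (a * c * Real.exp (c * t) + b * d * Real.exp (d * t)) t :=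
  (hda1 a c t).add (hda1 b d t)

lemma deriv_aux (a b c d : ℝ) :
    deriv (fun s => a * Real.exp (c * s) + b * Real.exp (d * s))
      = fun t => a * c * Real.exp (c * t) + b * d * Real.exp (d * t) :=
  funext fun t => (hda2 a b c d t).deriv

lemma cd_aux (a b c d : ℝ) :
    ContDiff ℝ 2 (fun s => a * Real.exp (c * s) + b * Real.exp (d * s)) := by
  apply ContDiff.add
  · exact contDiff_const.mul ((Real.contDiff_exp.of_le le_top).comp
      (contDiff_const.mul contDiff_id))
  · exact contDiff_const.mul ((Real.contDiff_exp.of_le le_top).comp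
      (contDiff_const.mul contDiff_id))

lemma tend_aux (a c : ℝ) (hc : c < 0) :
    Tendsto (fun t => a * Real.exp (c * t)) atTop (nhds 0) := by
  have h1 : Tendsto (fun t : ℝ => c * t) atTop atBot :=
    Tendsto.const_mul_atTop_of_neg hc tendsto_id
  have := Real.tendsto_exp_atBot.comp h1
  simpa using this.const_mul a

lemma int_exp (k e : ℝ) (he : e < 0) :
    IntegrableOn (fun t => k * Real.exp (e * t)) (Ioi (0:ℝ)) := by
  have h : IntegrableOn (fun t => Real.exp (-(-e) * t)) (Ioi (0:ℝ)) :=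
    exp_neg_integrableOn_Ioi 0 (by linarith)
  simpa [IntegrableOn] using h.const_mul k

lemma int_sq (a b c d : ℝ) (hc : c < 0) (hd : d < 0) :
    IntegrableOn (fun t => (a * Real.exp (c * t) + b * Real.exp (d * t)) ^ 2)
      (Ioi (0:ℝ)) := by
  have h := ((int_exp (a^2) (2*c) (by linarith)).add
    (int_exp (2*a*b) (c+d) (by linarith))).add (int_exp (b^2) (2*d) (by linarith))
  have heq : (fun t => (a * Real.exp (c * t) + b * Real.exp (d * t)) ^ 2)
      = fun t => (a^2 * Real.exp (2*c * t) + 2*a*b * Real.exp ((c+d) * t))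
        + b^2 * Real.exp (2*d * t) := by
    funext t
    rw [show 2*c*t = c*t + c*t by ring, show (c+d)*t = c*t + d*t by ring,
      show 2*d*t = d*t + d*t by ring, Real.exp_add, Real.exp_add, Real.exp_add]
    ring
  rw [heq]; exact h

lemma theta_root (lam gam sig al : ℝ) (hlam : 0 < lam)
    (hsig : 0 < sig) (hal : 0 < al) :
    lam * (thetaMinus lam gam sig al) ^ 2 - gam * thetaMinus lam gam sig al
      - al * sig ^ 2 = 0 := by
  unfold thetaMinus thetaHat
  have hs : Real.sqrt (gam ^ 2 + 4 * al * sig ^ 2 * lam) ^ 2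
      = gam ^ 2 + 4 * al * sig ^ 2 * lam := Real.sq_sqrt (by positivity)
  set s := Real.sqrt (gam ^ 2 + 4 * al * sig ^ 2 * lam)
  field_simp
  ring_nf
  nlinarith [hs]

lemma rho_root (n : ℕ) (lam gam sig al : ℝ) (hlam : 0 < lam)
    (hsig : 0 < sig) (hal : 0 < al) :
    ((n:ℝ) + 1) * lam * (rhoMinus n lam gam sig al) ^ 2
      + ((n:ℝ) - 1) * gam * rhoMinus n lam gam sig al - al * sig ^ 2 = 0 := by
  have hn1 : (0:ℝ) < (n:ℝ) + 1 := by positivity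
  have hs : Real.sqrt (((n : ℝ) - 1) ^ 2 * gam ^ 2 + 4 * ((n : ℝ) + 1) * al * sig ^ 2 * lam) ^ 2
      = ((n : ℝ) - 1) ^ 2 * gam ^ 2 + 4 * ((n : ℝ) + 1) * al * sig ^ 2 * lam :=
    Real.sq_sqrt (by positivity)
  set s := Real.sqrt (((n : ℝ) - 1) ^ 2 * gam ^ 2 + 4 * ((n : ℝ) + 1) * al * sig ^ 2 * lam)
    with hsdef
  set c := 2 * ((n:ℝ) + 1) * lam with hcdef
  have hc : c ≠ 0 := by positivity
  have hr : c * rhoMinus n lam gam sig al = -(((n:ℝ) - 1) * gam) - s := by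
    unfold rhoMinus rhoHat
    rw [← hsdef, ← hcdef, div_sub_div_same, mul_div_cancel₀ _ hc]
  have hc2 : c^2 ≠ 0 := pow_ne_zero 2 hc
  have key : c^2 * (((n:ℝ) + 1) * lam * (rhoMinus n lam gam sig al) ^ 2
      + ((n:ℝ) - 1) * gam * rhoMinus n lam gam sig al - al * sig ^ 2) = 0 := by
    have expand : c^2 * (((n:ℝ) + 1) * lam * (rhoMinus n lam gam sig al) ^ 2
        + ((n:ℝ) - 1) * gam * rhoMinus n lam gam sig al - al * sig ^ 2)
        = ((n:ℝ) + 1) * lam * (c * rhoMinus n lam gam sig al)^2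
          + ((n:ℝ) - 1) * gam * c * (c * rhoMinus n lam gam sig al)
          - al * sig ^ 2 * c^2 := by ring
    rw [expand, hr, hcdef]
    linear_combination (((n:ℝ)+1)*lam) * hs
  exact (mul_eq_zero.mp key).resolve_left hc2

lemma theta_neg (lam gam sig al : ℝ) (hlam : 0 < lam) (hgam : 0 ≤ gam)
    (hsig : 0 < sig) (hal : 0 < al) : thetaMinus lam gam sig al < 0 := by
  unfold thetaMinus thetaHat
  rw [div_sub_div_same]
  apply div_neg_of_neg_of_pos _ (by linarith)
  have h : gam < Real.sqrt (gam ^ 2 + 4 * al * sig ^ 2 * lam) := by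
    rw [show gam ^ 2 + 4 * al * sig ^ 2 * lam
      = gam ^ 2 + 4 * al * sig ^ 2 * lam from rfl]
    exact (Real.lt_sqrt hgam).mpr
      (by nlinarith [mul_pos (mul_pos hal (pow_pos hsig 2)) hlam])
  linarith

lemma rho_neg (n : ℕ) (hn : 0 < n) (lam gam sig al : ℝ) (hlam : 0 < lam)
    (hgam : 0 ≤ gam) (hsig : 0 < sig) (hal : 0 < al) :
    rhoMinus n lam gam sig al < 0 := by
  unfold rhoMinus rhoHat
  rw [div_sub_div_same]
  have hn1 : (1:ℝ) ≤ (n:ℝ) := by exact_mod_cast hn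
  apply div_neg_of_neg_of_pos _ (by positivity)
  have h1 : 0 ≤ ((n:ℝ) - 1) * gam := by nlinarith
  have h2 : 0 < Real.sqrt (((n:ℝ) - 1) ^ 2 * gam ^ 2
      + 4 * ((n:ℝ) + 1) * al * sig ^ 2 * lam) :=
    Real.sqrt_pos.mpr (by positivity)
  linarith

/-- the closed-form infinite-horizon strategies are C², satisfy
the initial conditions, vanish at infinity, are square-integrable together
with their derivatives, and solve the coupled Euler–Lagrange system on
`[0,∞)`. -/
theorem stmt_11 (n : ℕ) (hn : 0 < n) (lam gam sig al : ℝ)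
    (hlam : 0 < lam) (hgam : 0 ≤ gam) (hsig : 0 < sig) (hal : 0 < al)
    (x : Fin n → ℝ) :
    (∀ i, ContDiff ℝ 2 (XstarInf n lam gam sig al x i)) ∧
    (∀ i, XstarInf n lam gam sig al x i 0 = x i) ∧
    (∀ i, Tendsto (XstarInf n lam gam sig al x i) atTop (nhds 0)) ∧
    (∀ i, IntegrableOn (fun t => (XstarInf n lam gam sig al x i t) ^ 2)
      (Ioi 0)) ∧
    (∀ i, IntegrableOn
      (fun t => (deriv (XstarInf n lam gam sig al x i) t) ^ 2) (Ioi 0)) ∧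
    (∀ i, ∀ t : ℝ, 0 ≤ t →
      al * sig ^ 2 * XstarInf n lam gam sig al x i t
          - 2 * lam * deriv (deriv (XstarInf n lam gam sig al x i)) t
        = gam * ∑ j ∈ Finset.univ.erase i,
            deriv (XstarInf n lam gam sig al x j) t
          + lam * ∑ j ∈ Finset.univ.erase i,
            deriv (deriv (XstarInf n lam gam sig al x j)) t) := by
  have hnR : (0:ℝ) < (n:ℝ) := by exact_mod_cast hn
  set θ := thetaMinus lam gam sig al with hθdef
  set ρ := rhoMinus n lam gam sig al with hρdef
  set m := (1 / (n : ℝ)) * ∑ j, x j with hmdef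
  have hθneg : θ < 0 := theta_neg lam gam sig al hlam hgam hsig hal
  have hρneg : ρ < 0 := rho_neg n hn lam gam sig al hlam hgam hsig hal
  have hθroot : lam * θ ^ 2 - gam * θ - al * sig ^ 2 = 0 :=
    theta_root lam gam sig al hlam hsig hal
  have hρroot : ((n:ℝ) + 1) * lam * ρ ^ 2 + ((n:ℝ) - 1) * gam * ρ - al * sig ^ 2 = 0 :=
    rho_root n lam gam sig al hlam hsig hal
  have hX : ∀ i, XstarInf n lam gam sig al x i
      = fun t => (x i - m) * Real.exp (θ * t) + m * Real.exp (ρ * t) := fun i => rfl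
  have hd1 : ∀ i, deriv (XstarInf n lam gam sig al x i)
      = fun t => (x i - m) * θ * Real.exp (θ * t) + m * ρ * Real.exp (ρ * t) := by
    intro i; rw [hX i, deriv_aux]
  have hd2 : ∀ i, deriv (deriv (XstarInf n lam gam sig al x i))
      = fun t => (x i - m) * θ * θ * Real.exp (θ * t)
        + m * ρ * ρ * Real.exp (ρ * t) := by
    intro i; rw [hd1 i, deriv_aux]
  have hnm : (n:ℝ) * m = ∑ j, x j := by
    rw [hmdef]; field_simp
  refine ⟨?_, ?_, ?_, ?_, ?_, ?_⟩
  · intro i; rw [hX i]; exact cd_aux _ _ _ _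
  · intro i
    rw [hX i]
    simp
  · intro i
    rw [hX i]
    simpa using (tend_aux (x i - m) θ hθneg).add (tend_aux m ρ hρneg)
  · intro i
    rw [hX i]
    exact int_sq _ _ _ _ hθneg hρneg
  · intro i
    rw [hd1 i]
    exact int_sq _ _ _ _ hθneg hρneg
  · intro i t ht
    have hXt : ∀ j, XstarInf n lam gam sig al x j t
        = (x j - m) * Real.exp (θ * t) + m * Real.exp (ρ * t) := fun j => rfl
    have hd1t : ∀ j, deriv (XstarInf n lam gam sig al x j) t
        = (x j - m) * θ * Real.exp (θ * t) + m * ρ * Real.exp (ρ * t) := fun j => by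
      rw [hd1 j]
    have hd2t : ∀ j, deriv (deriv (XstarInf n lam gam sig al x j)) t
        = (x j - m) * θ * θ * Real.exp (θ * t) + m * ρ * ρ * Real.exp (ρ * t) := fun j => by
      rw [hd2 j]
    simp only [hd2t, hd1t, hXt]
    have key : ∀ p q : ℝ, (∑ j ∈ Finset.univ.erase i, ((x j - m) * p + m * q))
        = -(x i - m) * p + ((n:ℝ) - 1) * (m * q) := by
      intro p q
      rw [Finset.sum_erase_eq_sub (Finset.mem_univ i), Finset.sum_add_distrib,
        Finset.sum_const, ← Finset.sum_mul, Finset.sum_sub_distrib,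
        Finset.sum_const, Finset.card_univ, Fintype.card_fin, nsmul_eq_mul,
        nsmul_eq_mul]
      linear_combination (-p) * hnm
    have hs1 : (∑ j ∈ Finset.univ.erase i,
        ((x j - m) * θ * Real.exp (θ * t) + m * ρ * Real.exp (ρ * t)))
        = -(x i - m) * (θ * Real.exp (θ * t))
          + ((n:ℝ) - 1) * (m * (ρ * Real.exp (ρ * t))) := by
      rw [← key (θ * Real.exp (θ * t)) (ρ * Real.exp (ρ * t))]
      exact Finset.sum_congr rfl fun j _ => by ring
    have hs2 : (∑ j ∈ Finset.univ.erase i,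
        ((x j - m) * θ * θ * Real.exp (θ * t) + m * ρ * ρ * Real.exp (ρ * t)))
        = -(x i - m) * (θ * θ * Real.exp (θ * t))
          + ((n:ℝ) - 1) * (m * (ρ * ρ * Real.exp (ρ * t))) := by
      rw [← key (θ * θ * Real.exp (θ * t)) (ρ * ρ * Real.exp (ρ * t))]
      exact Finset.sum_congr rfl fun j _ => by ring
    rw [hs1, hs2]
    linear_combination (-((x i - m) * Real.exp (θ * t))) * hθroot
      + (-(m * Real.exp (ρ * t))) * hρroot
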